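/- Let G be a connected graph without loops and without isthmuses. Then the number of spanning trees of G, which equals χ(G;1,1), is at least |E(G)|. -/

import Mathlib

open scoped Classical

noncomputable section

structure Multigraph where
  V : Type
  E : Type
  [fintypeV : Fintype V]
  [fintypeE : Fintype E]
  ends : E → Sym2 V

attribute [instance] Multigraph.fintypeV Multigraph.fintypeE

namespace Multigraph

/-- The simple graph underlying a multigraph (loops and multiplicities dropped);
it has the same connectivity properties as the multigraph. -/
def toSimpleGraph (G : Multigraph) : SimpleGraph G.V where
  Adj v w := v ≠ w ∧ ∃ e : G.E, G.ends e = s(v, w)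
  symm := ⟨by
    rintro v w ⟨hne, e, he⟩
    exact ⟨hne.symm, e, by rw [he]; exact Sym2.eq_swap⟩⟩
  loopless := ⟨fun v h => h.1 rfl⟩

/-- `p0 G` is the number of connected components of `G`. -/
def p0 (G : Multigraph) : ℕ := Nat.card G.toSimpleGraph.ConnectedComponent

/-- The number of vertices of `G`. -/
def numV (G : Multigraph) : ℕ := Fintype.card G.V

/-- The number of edges of `G`. -/
def numE (G : Multigraph) : ℕ := Fintype.card G.E

/-- `p1 G = |E| - |V| + p0 G` is the cyclomatic number of `G`. -/
def p1 (G : Multigraph) : ℕ := G.numE + G.p0 - G.numV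

/-- A multigraph is connected if it has exactly one connected component. -/
def Connected (G : Multigraph) : Prop := G.p0 = 1

/-- A loop is an edge whose two endpoints coincide. -/
def IsLoop (G : Multigraph) (e : G.E) : Prop := (G.ends e).IsDiag

/-- The spanning subgraph of `G` with edge set `S`. -/
def spanning (G : Multigraph) (S : Set G.E) : Multigraph where
  V := G.V
  E := ↥S
  ends := fun e => G.ends e.1

/-- `G` with the edge `e` deleted. -/
def deleteEdge (G : Multigraph) (e : G.E) : Multigraph where
  V := G.V
  E := {f : G.E // f ≠ e}
  ends := fun f => G.ends f.1

/-- An isthmus is an edge whose deletion increases the number of components. -/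
def IsIsthmus (G : Multigraph) (e : G.E) : Prop := G.p0 < (G.deleteEdge e).p0

/-- The setoid on vertices identifying the two endpoints of `e`. -/
def contractSetoid (G : Multigraph) (e : G.E) : Setoid G.V :=
  Relation.EqvGen.setoid fun v w => G.ends e = s(v, w)

/-- `G` with the edge `e` contracted: `e` is deleted and its endpoints identified. -/
def contractEdge (G : Multigraph) (e : G.E) : Multigraph where
  V := Quotient (G.contractSetoid e)
  E := {f : G.E // f ≠ e}
  ends := fun f => (G.ends f.1).map (Quotient.mk (G.contractSetoid e))

/-- The rank `r(S) = |V(G)| - p0(V(G), S)` of a set of edges. -/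
def rank (G : Multigraph) (S : Set G.E) : ℕ := G.numV - (G.spanning S).p0

/-- The Tutte polynomial (Whitney rank generating function)
`χ(G; x, y) = ∑_{S ⊆ E} (x-1)^(r(E)-r(S)) (y-1)^(|S|-r(S))`, as an element of
`ℤ[x][y]` (so `x = Polynomial.C Polynomial.X` and `y = Polynomial.X`). -/
def tutte (G : Multigraph) : Polynomial (Polynomial ℤ) :=
  ∑ S : Finset G.E,
    Polynomial.C (Polynomial.X - 1) ^ (G.rank Set.univ - G.rank ↑S) *
      (Polynomial.X - Polynomial.C 1) ^ (S.card - G.rank ↑S)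

/-- `tutteCoeff G i j` is the coefficient `v_{i,j}` of `x^i y^j` in the Tutte polynomial. -/
def tutteCoeff (G : Multigraph) (i j : ℕ) : ℤ := (G.tutte.coeff j).coeff i

/-- Evaluation of the Tutte polynomial at `x`, `y` in a commutative ring. -/
def tutteEval {K : Type} [CommRing K] (G : Multigraph) (x y : K) : K :=
  Polynomial.eval₂ (Polynomial.eval₂RingHom (Int.castRingHom K) x) y G.tutte

/-- An isomorphism of multigraphs. -/
structure Iso (G H : Multigraph) where
  vEquiv : G.V ≃ H.V
  eEquiv : G.E ≃ H.E
  ends_eq : ∀ e : G.E, H.ends (eEquiv e) = (G.ends e).map vEquiv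

/-- The disjoint union of two multigraphs. -/
def disjUnion (G H : Multigraph) : Multigraph where
  V := G.V ⊕ H.V
  E := G.E ⊕ H.E
  ends := fun e =>
    Sum.elim (fun e => (G.ends e).map Sum.inl) (fun e => (H.ends e).map Sum.inr) e

def joinSetoid (G H : Multigraph) (v : G.V) (w : H.V) : Setoid (G.V ⊕ H.V) :=
  Relation.EqvGen.setoid fun a b => a = Sum.inl v ∧ b = Sum.inr w

/-- The one-vertex join `G * H`, identifying the vertex `v` of `G` with the vertex `w` of `H`. -/
def join (G H : Multigraph) (v : G.V) (w : H.V) : Multigraph where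
  V := Quotient (G.joinSetoid H v w)
  E := G.E ⊕ H.E
  ends := fun e =>
    Sum.elim
      (fun e => (G.ends e).map fun a => Quotient.mk (G.joinSetoid H v w) (Sum.inl a))
      (fun e => (H.ends e).map fun a => Quotient.mk (G.joinSetoid H v w) (Sum.inr a)) e

/-- A multigraph consisting of a single loop on a single vertex. -/
def IsSingleLoop (G : Multigraph) : Prop :=
  Fintype.card G.V = 1 ∧ Fintype.card G.E = 1 ∧ ∀ e : G.E, G.IsLoop e

/-- `G` can be expressed as a one-vertex join `G₁ * G₂` in which each factor has
more than one vertex or is a single loop. -/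
def IsJoinDecomposable (G : Multigraph) : Prop :=
  ∃ (G₁ G₂ : Multigraph) (v₁ : G₁.V) (v₂ : G₂.V),
    Nonempty (Iso G (join G₁ G₂ v₁ v₂)) ∧
    (1 < Fintype.card G₁.V ∨ G₁.IsSingleLoop) ∧
    (1 < Fintype.card G₂.V ∨ G₂.IsSingleLoop)

/-- A multigraph is 2-connected if it is connected and admits no one-vertex join
decomposition (equivalently, it is connected with no cut vertex). -/
def TwoConnected (G : Multigraph) : Prop := G.Connected ∧ ¬G.IsJoinDecomposable

end Multigraph
end

namespace Multigraph

/-- A spanning tree of `G`: a spanning subgraph which is connected and acyclic. -/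
def IsSpanningTree (G : Multigraph) (T : Set G.E) : Prop :=
  (G.spanning T).Connected ∧ (G.spanning T).p1 = 0

end Multigraph

set_option linter.unusedSectionVars false
set_option linter.unusedVariables false
set_option maxHeartbeats 1000000
section MGauxSec

namespace MGaux
open Relation

variable {V : Type} [Fintype V]

omit [Fintype V] in
theorem eqvGen_imp {r s : V → V → Prop} (h : ∀ v w, r v w → EqvGen s v w) :
    ∀ v w, EqvGen r v w → EqvGen s v w := by
  intro v w hvw
  induction hvw with
  | rel x y hxy => exact h x y hxy
  | refl x => exact EqvGen.refl x
  | symm x y _ ih => exact ih.symm _ _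
  | trans x y z _ _ ih1 ih2 => exact ih1.trans _ _ _ ih2

/-- number of classes -/
noncomputable def qc (r : V → V → Prop) : ℕ := Nat.card (Quot (EqvGen r))

instance (r : V → V → Prop) : Finite (Quot (EqvGen r)) :=
  Quotient.finite (EqvGen.setoid r)

theorem qc_le_of_imp {r s : V → V → Prop} (h : ∀ v w, r v w → EqvGen s v w) :
    qc s ≤ qc r := by
  have hf : Function.Surjective
      (Quot.lift (fun v => Quot.mk (EqvGen s) v)
        (fun a b hab => Quot.sound (eqvGen_imp h a b hab)) :
        Quot (EqvGen r) → Quot (EqvGen s)) := by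
    intro x
    refine Quot.induction_on x (fun v => ⟨Quot.mk _ v, rfl⟩)
  exact Nat.card_le_card_of_surjective _ hf

theorem qc_congr {r s : V → V → Prop} (h : ∀ v w, r v w ↔ s v w) : qc r = qc s :=
  le_antisymm (qc_le_of_imp (fun v w hv => EqvGen.rel _ _ ((h v w).2 hv)))
    (qc_le_of_imp (fun v w hv => EqvGen.rel _ _ ((h v w).1 hv)))

theorem qc_le_card (r : V → V → Prop) : qc r ≤ Fintype.card V := by
  rw [← Nat.card_eq_fintype_card]
  exact Nat.card_le_card_of_surjective (Quot.mk _) (fun x => Quot.induction_on x fun v => ⟨v, rfl⟩)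

theorem one_le_qc [Nonempty V] (r : V → V → Prop) : 1 ≤ qc r := by
  haveI : Nonempty (Quot (EqvGen r)) := ⟨Quot.mk _ (Classical.arbitrary V)⟩
  exact Nat.card_pos

theorem nonempty_of_qc {r : V → V → Prop} (h : qc r ≠ 0) : Nonempty V := by
  have h1 : Nonempty (Quot (EqvGen r)) := (Nat.card_pos_iff.mp (Nat.pos_of_ne_zero h)).1
  obtain ⟨x⟩ := h1
  exact Quot.induction_on x fun v => ⟨v⟩

omit [Fintype V] in
theorem quot_mk_eq_iff {r : V → V → Prop} {a b : V} :
    Quot.mk (EqvGen r) a = Quot.mk (EqvGen r) b ↔ EqvGen r a b := by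
  rw [Quot.eq]
  constructor
  · exact fun h => eqvGen_imp (fun _ _ hh => hh) a b h
  · exact fun h => EqvGen.rel _ _ h

theorem qc_eq_one_iff {r : V → V → Prop} :
    qc r = 1 ↔ Nonempty V ∧ ∀ v w, EqvGen r v w := by
  constructor
  · intro h
    obtain ⟨hs, ⟨x⟩⟩ := Nat.card_eq_one_iff_unique.mp h
    refine ⟨Quot.induction_on x fun v => ⟨v⟩, fun v w => ?_⟩
    exact quot_mk_eq_iff.1 (hs.allEq _ _)
  · rintro ⟨⟨v0⟩, h⟩
    rw [qc, Nat.card_eq_one_iff_unique]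
    constructor
    · constructor
      intro x y
      refine Quot.induction_on₂ x y fun v w => quot_mk_eq_iff.2 (h v w)
    · exact ⟨Quot.mk _ v0⟩

def push (r s : V → V → Prop) : Quot (EqvGen r) → Quot (EqvGen r) → Prop :=
  fun x y => ∃ v w, Quot.mk (EqvGen r) v = x ∧ Quot.mk (EqvGen r) w = y ∧ s v w

theorem qc_comp (r s : V → V → Prop) :
    qc (fun v w => r v w ∨ s v w) = Nat.card (Quot (EqvGen (push r s))) := by
  apply Nat.card_congr
  have hf : ∀ a b : V, EqvGen (fun v w => r v w ∨ s v w) a b →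
      Quot.mk (EqvGen (push r s)) (Quot.mk (EqvGen r) a) =
      Quot.mk (EqvGen (push r s)) (Quot.mk (EqvGen r) b) := by
    intro a b h
    induction h with
    | rel x y hxy =>
        rcases hxy with hr | hs'
        · exact congrArg _ (Quot.sound (EqvGen.rel _ _ hr))
        · exact Quot.sound (EqvGen.rel _ _ ⟨x, y, rfl, rfl, hs'⟩)
    | refl x => rfl
    | symm _ _ _ ih => exact ih.symm
    | trans _ _ _ _ _ ih1 ih2 => exact ih1.trans ih2
  have hg1 : ∀ a b : V, EqvGen r a b →
      Quot.mk (EqvGen fun v w => r v w ∨ s v w) a =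
      Quot.mk (EqvGen fun v w => r v w ∨ s v w) b := fun a b hab =>
    Quot.sound (eqvGen_imp (fun v w h => EqvGen.rel _ _ (Or.inl h)) a b hab)
  have hg2 : ∀ x y : Quot (EqvGen r), EqvGen (push r s) x y →
      Quot.lift (fun v => Quot.mk (EqvGen fun v w => r v w ∨ s v w) v) hg1 x =
      Quot.lift (fun v => Quot.mk (EqvGen fun v w => r v w ∨ s v w) v) hg1 y := by
    intro x y h
    induction h with
    | rel x y hxy =>
        obtain ⟨v, w, rfl, rfl, hs'⟩ := hxy
        exact Quot.sound (EqvGen.rel _ _ (Or.inr hs'))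
    | refl x => rfl
    | symm _ _ _ ih => exact ih.symm
    | trans _ _ _ _ _ ih1 ih2 => exact ih1.trans ih2
  exact ⟨Quot.lift (fun v => Quot.mk _ (Quot.mk _ v)) hf,
    Quot.lift (Quot.lift (fun v => Quot.mk _ v) hg1) hg2,
    fun x => Quot.induction_on x fun v => rfl,
    fun x => Quot.induction_on x fun y => Quot.induction_on y fun v => rfl⟩

omit [Fintype V] in
theorem eqvGen_tiny {s : V → V → Prop} {a b : V}
    (hs : ∀ v w, s v w → (v = a ∧ w = b) ∨ (v = b ∧ w = a)) :
    ∀ v w, EqvGen s v w → v = w ∨ (v = a ∧ w = b) ∨ (v = b ∧ w = a) := by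
  intro v w h
  induction h with
  | rel x y hxy => exact Or.inr (hs x y hxy)
  | refl x => exact Or.inl rfl
  | symm x y _ ih =>
      rcases ih with h1 | ⟨h1a, h1b⟩ | ⟨h1a, h1b⟩ <;> subst_vars <;> tauto
  | trans x y z _ _ ih1 ih2 =>
      rcases ih1 with h1 | ⟨h1a, h1b⟩ | ⟨h1a, h1b⟩ <;>
        rcases ih2 with h2 | ⟨h2a, h2b⟩ | ⟨h2a, h2b⟩ <;> subst_vars <;> tauto

omit [Fintype V] in
theorem eqvGen_false {v w : V} (h : EqvGen (fun _ _ => False) v w) : v = w := by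
  induction h with
  | rel x y hxy => exact hxy.elim
  | refl x => rfl
  | symm _ _ _ ih => exact ih.symm
  | trans _ _ _ _ _ ih1 ih2 => exact ih1.trans ih2

theorem qc_false : qc (fun _ _ : V => False) = Fintype.card V := by
  rw [qc, ← Nat.card_eq_fintype_card]
  exact Nat.card_congr ⟨Quot.lift id (fun a b h => eqvGen_false h), Quot.mk _,
    fun x => Quot.induction_on x fun v => rfl, fun v => rfl⟩

theorem card_quot_tiny_le {W : Type} [Finite W] {s : W → W → Prop} {a b : W}
    (hs : ∀ v w, s v w → (v = a ∧ w = b) ∨ (v = b ∧ w = a)) :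
    Nat.card W ≤ Nat.card (Quot (EqvGen s)) + 1 := by
  haveI : Finite (Quot (EqvGen s)) := Quotient.finite (EqvGen.setoid s)
  have hinj : Function.Injective (fun z : W =>
      if z = b then (Sum.inr PUnit.unit : Quot (EqvGen s) ⊕ (PUnit : Type))
      else Sum.inl (Quot.mk _ z)) := by
    intro z w h
    by_cases hz : z = b <;> by_cases hw : w = b <;> simp only [hz, hw, if_true, if_false,
      if_pos, if_neg, reduceIte] at h
    · exact hz.trans hw.symm
    · simp at h
    · simp at h
    · simp only [Sum.inl.injEq] at h
      rcases eqvGen_tiny hs z w (quot_mk_eq_iff.mp h) with h' | ⟨rfl, rfl⟩ | ⟨rfl, rfl⟩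
      · exact h'
      · exact absurd rfl hw
      · exact absurd rfl hz
  calc Nat.card W ≤ Nat.card (Quot (EqvGen s) ⊕ PUnit) :=
        Nat.card_le_card_of_injective _ hinj
    _ = Nat.card (Quot (EqvGen s)) + 1 := by rw [Nat.card_sum]; simp

theorem card_quot_tiny {W : Type} [Fintype W] {s : W → W → Prop} {a b : W}
    (hs : ∀ v w, s v w → (v = a ∧ w = b) ∨ (v = b ∧ w = a)) (hab : s a b) (hne : a ≠ b) :
    Nat.card (Quot (EqvGen s)) = Fintype.card W - 1 := by
  have key : Nat.card {v : W // v ≠ b} = Nat.card (Quot (EqvGen s)) := by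
    apply Nat.card_congr
    apply Equiv.ofBijective (fun v : {v : W // v ≠ b} => Quot.mk (EqvGen s) v.1)
    constructor
    · intro z w h
      rcases eqvGen_tiny hs z.1 w.1 (quot_mk_eq_iff.mp h) with h' | ⟨h1, h2⟩ | ⟨h1, h2⟩
      · exact Subtype.ext h'
      · exact absurd h2 w.2
      · exact absurd h1 z.2
    · intro x
      refine Quot.induction_on x fun v => ?_
      by_cases h : v = b
      · exact ⟨⟨a, hne⟩, by rw [h]; exact Quot.sound (EqvGen.rel _ _ hab)⟩
      · exact ⟨⟨v, h⟩, rfl⟩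
  rw [← key, Nat.card_eq_fintype_card]
  rw [Fintype.card_subtype_compl, Fintype.card_subtype_eq]

theorem qc_union_tiny_ge {r s : V → V → Prop} {a b : V}
    (hs : ∀ v w, s v w → (v = a ∧ w = b) ∨ (v = b ∧ w = a)) :
    qc r ≤ qc (fun v w => r v w ∨ s v w) + 1 := by
  rw [qc_comp r s]
  have hpush : ∀ x y, push r s x y →
      (x = Quot.mk (EqvGen r) a ∧ y = Quot.mk (EqvGen r) b) ∨
      (x = Quot.mk (EqvGen r) b ∧ y = Quot.mk (EqvGen r) a) := by
    rintro x y ⟨v, w, rfl, rfl, hvw⟩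
    rcases hs v w hvw with ⟨rfl, rfl⟩ | ⟨rfl, rfl⟩
    · exact Or.inl ⟨rfl, rfl⟩
    · exact Or.inr ⟨rfl, rfl⟩
  exact card_quot_tiny_le hpush

theorem qc_union_no_drop {r s : V → V → Prop} {a b : V}
    (hs : ∀ v w, s v w → (v = a ∧ w = b) ∨ (v = b ∧ w = a)) (hrel : EqvGen r a b) :
    qc (fun v w => r v w ∨ s v w) = qc r := by
  apply le_antisymm
  · exact qc_le_of_imp (fun v w h => EqvGen.rel _ _ (Or.inl h))
  · apply qc_le_of_imp
    intro v w h
    rcases h with h | h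
    · exact EqvGen.rel _ _ h
    · rcases hs v w h with ⟨rfl, rfl⟩ | ⟨rfl, rfl⟩
      · exact hrel
      · exact hrel.symm _ _

theorem qc_union_strict {r s : V → V → Prop} {a b : V}
    (hs : ∀ v w, s v w → (v = a ∧ w = b) ∨ (v = b ∧ w = a)) (hab : s a b)
    (hnrel : ¬ EqvGen r a b) :
    qc (fun v w => r v w ∨ s v w) < qc r := by
  rw [qc_comp r s, qc]
  haveI : Fintype (Quot (EqvGen r)) := Fintype.ofFinite _
  haveI : Fintype (Quot (EqvGen (push r s))) := Fintype.ofFinite _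
  rw [Nat.card_eq_fintype_card, Nat.card_eq_fintype_card]
  apply Fintype.card_lt_of_surjective_not_injective (Quot.mk (EqvGen (push r s)))
  · exact fun x => Quot.induction_on x fun v => ⟨v, rfl⟩
  · intro hinj
    apply hnrel
    apply quot_mk_eq_iff.mp
    apply hinj
    exact Quot.sound (EqvGen.rel _ _ ⟨a, b, rfl, rfl, hab⟩)

theorem qc_union_diag {r s : V → V → Prop}
    (hs : ∀ v w, s v w → v = w) :
    qc (fun v w => r v w ∨ s v w) = qc r := by
  apply le_antisymm
  · exact qc_le_of_imp (fun v w h => EqvGen.rel _ _ (Or.inl h))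
  · apply qc_le_of_imp
    rintro v w (h | h)
    · exact EqvGen.rel _ _ h
    · exact hs v w h ▸ EqvGen.refl v

end MGaux

end MGauxSec

namespace Multigraph
open Relation MGaux

variable (G : Multigraph)

/-- The relation on vertices induced by a set of edges. -/
def erel (S : Set G.E) : G.V → G.V → Prop := fun v w => ∃ e ∈ S, G.ends e = s(v, w)

/-- Number of components of the spanning subgraph with edge set `S`. -/
noncomputable def cset (S : Set G.E) : ℕ := MGaux.qc (G.erel S)

variable {G}

theorem sym2_exists_rep (z : Sym2 G.V) : ∃ p q, z = s(p, q) := by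
  induction z using Sym2.ind with
  | _ x y => exact ⟨x, y, rfl⟩

theorem reach_iff {v w : G.V} :
    G.toSimpleGraph.Reachable v w ↔ EqvGen (G.erel Set.univ) v w := by
  constructor
  · rintro ⟨p⟩
    induction p with
    | nil => exact EqvGen.refl _
    | cons h _ ih =>
        obtain ⟨hne, e, he⟩ := h
        exact (EqvGen.rel _ _ ⟨e, Set.mem_univ e, he⟩).trans _ _ _ ih
  · intro h
    induction h with
    | rel x y hxy =>
        obtain ⟨e, _, he⟩ := hxy
        by_cases hxy' : x = y
        · subst hxy'; exact SimpleGraph.Reachable.refl _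
        · exact SimpleGraph.Adj.reachable ⟨hxy', e, he⟩
    | refl x => exact SimpleGraph.Reachable.refl _
    | symm _ _ _ ih => exact ih.symm
    | trans _ _ _ _ _ ih1 ih2 => exact ih1.trans ih2

theorem p0_eq (G : Multigraph) : G.p0 = G.cset Set.univ := by
  rw [p0, cset, MGaux.qc]
  exact Nat.card_congr (Quot.congrRight fun v w => reach_iff)

theorem p0_spanning (G : Multigraph) (S : Set G.E) : (G.spanning S).p0 = G.cset S := by
  rw [p0_eq, cset, cset]
  apply MGaux.qc_congr
  intro v w
  constructor
  · rintro ⟨f, -, hf⟩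
    exact ⟨f.1, f.2, hf⟩
  · rintro ⟨f, hf, h⟩
    exact ⟨⟨f, hf⟩, Set.mem_univ _, h⟩

theorem cset_delete (G : Multigraph) (e : G.E) (A : Set (G.deleteEdge e).E) :
    (G.deleteEdge e).cset A = G.cset (Subtype.val '' A) := by
  apply MGaux.qc_congr
  intro v w
  constructor
  · rintro ⟨f, hf, h⟩
    exact ⟨f.1, ⟨f, hf, rfl⟩, h⟩
  · rintro ⟨g, ⟨f, hf, rfl⟩, h⟩
    exact ⟨f, hf, h⟩

theorem p0_deleteEdge (G : Multigraph) (e : G.E) :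
    (G.deleteEdge e).p0 = G.cset {g | g ≠ e} := by
  rw [p0_eq, cset_delete]
  have h : Subtype.val '' (Set.univ : Set (G.deleteEdge e).E) = {g | g ≠ e} := by
    ext g
    simp [deleteEdge]
  rw [h]

theorem cset_contract (G : Multigraph) (e : G.E) (A : Set (G.contractEdge e).E) :
    (G.contractEdge e).cset A = G.cset (insert e (Subtype.val '' A)) := by
  have h2 : G.cset (insert e (Subtype.val '' A)) =
      MGaux.qc (fun v w => (G.ends e = s(v, w)) ∨ G.erel (Subtype.val '' A) v w) := by
    apply MGaux.qc_congr
    intro v w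
    constructor
    · rintro ⟨f, hf, h⟩
      rcases Set.mem_insert_iff.mp hf with rfl | hf'
      · exact Or.inl h
      · exact Or.inr ⟨f, hf', h⟩
    · rintro (h | ⟨f, hf, h⟩)
      · exact ⟨e, Set.mem_insert _ _, h⟩
      · exact ⟨f, Set.mem_insert_of_mem _ hf, h⟩
  rw [h2, MGaux.qc_comp]
  rw [cset]
  refine MGaux.qc_congr fun x y => ?_
  constructor
  · rintro ⟨f, hf, hef⟩
    obtain ⟨p, q, hpq⟩ := sym2_exists_rep (G.ends f.1)
    have hmap : (G.contractEdge e).ends f = s(Quot.mk _ p, Quot.mk _ q) := by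
      show Sym2.map _ (G.ends f.1) = _
      rw [hpq, Sym2.map_pair_eq]
      rfl
    rw [hmap] at hef
    rcases Sym2.eq_iff.mp hef with ⟨h1, h2⟩ | ⟨h1, h2⟩
    · exact ⟨p, q, h1, h2, ⟨f.1, ⟨f, hf, rfl⟩, hpq⟩⟩
    · exact ⟨q, p, h2, h1, ⟨f.1, ⟨f, hf, rfl⟩, hpq.trans Sym2.eq_swap⟩⟩
  · rintro ⟨v', w', h1, h2, ⟨g, ⟨f, hf, rfl⟩, hg⟩⟩
    refine ⟨f, hf, ?_⟩
    rw [← h1, ← h2]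
    show Sym2.map _ (G.ends f.1) = _
    rw [hg, Sym2.map_pair_eq]
    rfl

theorem p0_contract_spanning (G : Multigraph) (e : G.E) (A : Set (G.contractEdge e).E) :
    ((G.contractEdge e).spanning A).p0 = G.cset (insert e (Subtype.val '' A)) := by
  rw [p0_spanning, cset_contract]

end Multigraph


namespace Multigraph
open Relation MGaux

theorem numV_spanning (G : Multigraph) (S : Set G.E) : (G.spanning S).numV = G.numV := by
  rw [numV, numV, ← Nat.card_eq_fintype_card, ← Nat.card_eq_fintype_card]
  rfl

theorem numE_spanning (G : Multigraph) (S : Set G.E) : (G.spanning S).numE = S.ncard := by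
  rw [numE, ← Nat.card_eq_fintype_card]
  exact Nat.card_coe_set_eq S

theorem card_ne_subtype (E : Type) [Fintype E] (e : E) :
    Fintype.card {f : E // f ≠ e} = Fintype.card E - 1 := by
  rw [Fintype.card_subtype_compl, Fintype.card_subtype_eq]

theorem numE_deleteEdge (G : Multigraph) (e : G.E) : (G.deleteEdge e).numE = G.numE - 1 := by
  rw [numE, numE, ← Nat.card_eq_fintype_card, ← Nat.card_eq_fintype_card,
    Nat.card_eq_fintype_card, Nat.card_eq_fintype_card]
  exact card_ne_subtype G.E e

theorem numE_contractEdge (G : Multigraph) (e : G.E) : (G.contractEdge e).numE = G.numE - 1 := by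
  rw [numE, numE, ← Nat.card_eq_fintype_card, ← Nat.card_eq_fintype_card,
    Nat.card_eq_fintype_card, Nat.card_eq_fintype_card]
  exact card_ne_subtype G.E e

theorem ends_not_diag {G : Multigraph} {e : G.E} (h : ¬ G.IsLoop e) :
    ∃ a b, G.ends e = s(a, b) ∧ a ≠ b := by
  obtain ⟨a, b, hab⟩ := sym2_exists_rep (G.ends e)
  refine ⟨a, b, hab, fun hne => h ?_⟩
  rw [IsLoop, hab, hne]
  exact Sym2.isDiag_iff_proj_eq |>.mpr rfl

theorem tiny_of_ends {G : Multigraph} {e : G.E} {a b : G.V} (heq : G.ends e = s(a, b)) :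
    ∀ v w : G.V, G.ends e = s(v, w) → (v = a ∧ w = b) ∨ (v = b ∧ w = a) := by
  intro v w h
  rw [heq] at h
  rcases Sym2.eq_iff.mp h with ⟨h1, h2⟩ | ⟨h1, h2⟩
  · exact Or.inl ⟨h1.symm, h2.symm⟩
  · exact Or.inr ⟨h2.symm, h1.symm⟩

theorem erel_diff_iff {G : Multigraph} {S : Set G.E} {e : G.E} (he : e ∈ S) :
    ∀ v w, G.erel S v w ↔ (G.erel (S \ {e}) v w ∨ G.ends e = s(v, w)) := by
  intro v w
  constructor
  · rintro ⟨f, hf, h⟩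
    by_cases hfe : f = e
    · subst hfe; exact Or.inr h
    · exact Or.inl ⟨f, ⟨hf, hfe⟩, h⟩
  · rintro (⟨f, hf, h⟩ | h)
    · exact ⟨f, hf.1, h⟩
    · exact ⟨e, he, h⟩

theorem cset_mono {G : Multigraph} {S S' : Set G.E} (h : S ⊆ S') : G.cset S' ≤ G.cset S :=
  MGaux.qc_le_of_imp fun v w hvw => EqvGen.rel _ _ ⟨hvw.choose, h hvw.choose_spec.1, hvw.choose_spec.2⟩

theorem cset_diff_le {G : Multigraph} {S : Set G.E} {e : G.E} (he : e ∈ S) :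
    G.cset (S \ {e}) ≤ G.cset S + 1 := by
  obtain ⟨a, b, heq⟩ := sym2_exists_rep (G.ends e)
  have h1 : G.cset S = MGaux.qc (fun v w => G.erel (S \ {e}) v w ∨ G.ends e = s(v, w)) :=
    MGaux.qc_congr (erel_diff_iff he)
  rw [h1]
  exact MGaux.qc_union_tiny_ge (tiny_of_ends heq)

theorem cset_diff_eq {G : Multigraph} {S : Set G.E} {e : G.E} {a b : G.V} (he : e ∈ S)
    (heq : G.ends e = s(a, b)) (hrel : EqvGen (G.erel (S \ {e})) a b) :
    G.cset S = G.cset (S \ {e}) := by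
  have h1 : G.cset S = MGaux.qc (fun v w => G.erel (S \ {e}) v w ∨ G.ends e = s(v, w)) :=
    MGaux.qc_congr (erel_diff_iff he)
  rw [h1]
  exact MGaux.qc_union_no_drop (tiny_of_ends heq) hrel

theorem cset_diff_lt {G : Multigraph} {S : Set G.E} {e : G.E} {a b : G.V} (he : e ∈ S)
    (heq : G.ends e = s(a, b)) (hnrel : ¬ EqvGen (G.erel (S \ {e})) a b) :
    G.cset S < G.cset (S \ {e}) := by
  have h1 : G.cset S = MGaux.qc (fun v w => G.erel (S \ {e}) v w ∨ G.ends e = s(v, w)) :=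
    MGaux.qc_congr (erel_diff_iff he)
  rw [h1]
  exact MGaux.qc_union_strict (tiny_of_ends heq) heq hnrel

theorem cset_empty (G : Multigraph) : G.cset ∅ = G.numV := by
  rw [numV]
  have h : G.cset ∅ = MGaux.qc (fun _ _ : G.V => False) := by
    apply MGaux.qc_congr
    intro v w
    simp [erel]
  rw [h, MGaux.qc_false]

theorem numV_le_cset (G : Multigraph) (S : Set G.E) : G.numV ≤ G.cset S + S.ncard := by
  generalize hk : S.ncard = k
  induction k generalizing S with
  | zero =>
      have hS : S = ∅ := (Set.ncard_eq_zero S.toFinite).mp hk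
      subst hS
      rw [cset_empty]
      omega
  | succ k ih =>
      have hne : S.Nonempty := by
        rw [Set.nonempty_iff_ne_empty]
        rintro rfl
        simp at hk
      obtain ⟨e, he⟩ := hne
      have hcard : (S \ {e}).ncard = k := by
        rw [Set.ncard_diff_singleton_of_mem he, hk]
        omega
      have h1 := ih (S \ {e}) hcard
      have h2 := cset_diff_le he
      omega

theorem isSpanningTree_iff (G : Multigraph) (T : Set G.E) :
    G.IsSpanningTree T ↔ (G.cset T = 1 ∧ T.ncard + 1 = G.numV) := by
  have h0 : (G.spanning T).p0 = G.cset T := p0_spanning G T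
  have h1 : (G.spanning T).numE = T.ncard := numE_spanning G T
  have h2 : (G.spanning T).numV = G.numV := numV_spanning G T
  have hb : G.numV ≤ G.cset T + T.ncard := numV_le_cset G T
  constructor
  · rintro ⟨hc, hp⟩
    have hc' : (G.spanning T).p0 = 1 := hc
    have hp' : (G.spanning T).numE + (G.spanning T).p0 - (G.spanning T).numV = 0 := hp
    rw [h0] at hc'
    rw [h0, h1, h2, hc'] at hp'
    exact ⟨hc', by omega⟩
  · rintro ⟨hc, hn⟩
    refine ⟨show (G.spanning T).p0 = 1 by rw [h0]; exact hc, ?_⟩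
    show (G.spanning T).numE + (G.spanning T).p0 - (G.spanning T).numV = 0
    rw [h0, h1, h2, hc]
    omega

theorem forest_bound (G : Multigraph) :
    ∀ (k : ℕ) (S : Set G.E), S.ncard = k →
    (∀ e ∈ S, ∀ a b, G.ends e = s(a, b) → ¬ EqvGen (G.erel (S \ {e})) a b) →
    S.ncard + G.cset S = G.numV := by
  intro k
  induction k with
  | zero =>
      intro S hk _
      have hS : S = ∅ := (Set.ncard_eq_zero S.toFinite).mp hk
      subst hS
      rw [cset_empty]
      omega
  | succ k ih =>
      intro S hk hbr
      have hne : S.Nonempty := by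
        rw [Set.nonempty_iff_ne_empty]
        rintro rfl
        simp at hk
      obtain ⟨e, he⟩ := hne
      have hcard : (S \ {e}).ncard = k := by
        rw [Set.ncard_diff_singleton_of_mem he, hk]
        omega
      have hbr' : ∀ f ∈ S \ {e}, ∀ a b, G.ends f = s(a, b) →
          ¬ EqvGen (G.erel ((S \ {e}) \ {f})) a b := by
        intro f hf a b heq hrel
        apply hbr f hf.1 a b heq
        refine eqvGen_imp (fun v w hvw => EqvGen.rel _ _ ?_) a b hrel
        obtain ⟨g, hg, hg2⟩ := hvw
        exact ⟨g, ⟨hg.1.1, hg.2⟩, hg2⟩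
      have h1 := ih (S \ {e}) hcard hbr'
      obtain ⟨a, b, heq⟩ := sym2_exists_rep (G.ends e)
      have hlt : G.cset S < G.cset (S \ {e}) :=
        cset_diff_lt he heq (hbr e he a b heq)
      have hle : G.cset (S \ {e}) ≤ G.cset S + 1 := cset_diff_le he
      omega

theorem exists_spanning_tree_subset (G : Multigraph) :
    ∀ (k : ℕ) (S : Set G.E), S.ncard = k → G.cset S = 1 →
    ∃ T, T ⊆ S ∧ G.IsSpanningTree T := by
  intro k
  induction k using Nat.strong_induction_on with
  | _ k ih =>
      intro S hk hc
      by_cases hex : ∃ e ∈ S, G.cset (S \ {e}) = 1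
      · obtain ⟨e, he, he1⟩ := hex
        have hcard : (S \ {e}).ncard = k - 1 := by
          rw [Set.ncard_diff_singleton_of_mem he, hk]
        have hklt : k - 1 < k := by
          have : S.Nonempty := ⟨e, he⟩
          have : 0 < k := by
            rw [← hk]
            exact Set.ncard_pos S.toFinite |>.mpr this
          omega
        obtain ⟨T, hT1, hT2⟩ := ih (k - 1) hklt (S \ {e}) hcard he1
        exact ⟨T, hT1.trans Set.diff_subset, hT2⟩
      · push_neg at hex
        haveI : Nonempty G.V := MGaux.nonempty_of_qc (r := G.erel S) (by rw [← cset]; omega)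
        have hbr : ∀ e ∈ S, ∀ a b, G.ends e = s(a, b) →
            ¬ EqvGen (G.erel (S \ {e})) a b := by
          intro e he a b heq hrel
          have := cset_diff_eq he heq hrel
          exact hex e he (by omega)
        have hfb := forest_bound G k S hk hbr
        refine ⟨S, subset_refl S, (isSpanningTree_iff G S).mpr ⟨hc, by omega⟩⟩

theorem exists_spanning_tree {G : Multigraph} (h : G.Connected) :
    ∃ T, G.IsSpanningTree T := by
  have h1 : G.cset Set.univ = 1 := by rw [← p0_eq]; exact h
  obtain ⟨T, _, hT⟩ := exists_spanning_tree_subset G (Set.univ.ncard) Set.univ rfl h1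
  exact ⟨T, hT⟩

end Multigraph


namespace Multigraph
open Relation MGaux

theorem rank_eq (G : Multigraph) (S : Set G.E) : G.rank S = G.numV - G.cset S := by
  rw [rank, p0_spanning]

theorem cset_le_numV (G : Multigraph) (S : Set G.E) : G.cset S ≤ G.numV :=
  MGaux.qc_le_card _

theorem tutteEval_one_one (G : Multigraph) (hG : G.Connected) :
    G.tutteEval (1 : ℤ) 1 = (Nat.card {T : Set G.E // G.IsSpanningTree T} : ℤ) := by
  classical
  have hcu : G.cset Set.univ = 1 := by rw [← p0_eq]; exact hG
  haveI : Nonempty G.V := MGaux.nonempty_of_qc (r := G.erel Set.univ)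
    (by rw [← cset, hcu]; omega)
  have key : ∀ S : Finset G.E,
      ((G.rank Set.univ - G.rank ↑S = 0) ∧ (S.card - G.rank ↑S = 0)) ↔
        G.IsSpanningTree ↑S := by
    intro S
    rw [isSpanningTree_iff, rank_eq, rank_eq, hcu, Set.ncard_coe_finset]
    have l1 : 1 ≤ G.cset ↑S := MGaux.one_le_qc _
    have l2 : G.cset ↑S ≤ G.numV := cset_le_numV G ↑S
    have l3 : G.numV ≤ G.cset ↑S + S.card := by
      have := numV_le_cset G ↑S
      rwa [Set.ncard_coe_finset] at this
    have l4 : 1 ≤ G.numV := by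
      rw [numV]
      exact Fintype.card_pos
    omega
  have hterm : ∀ S : Finset G.E, S ∈ (Finset.univ : Finset (Finset G.E)) →
      Polynomial.eval₂ (Polynomial.eval₂RingHom (Int.castRingHom ℤ) 1) 1
        (Polynomial.C (Polynomial.X - 1) ^ (G.rank Set.univ - G.rank ↑S) *
          (Polynomial.X - Polynomial.C 1) ^ (S.card - G.rank ↑S)) =
      if G.IsSpanningTree ↑S then (1 : ℤ) else 0 := by
    intro S _
    have h1 : Polynomial.eval₂ (Polynomial.eval₂RingHom (Int.castRingHom ℤ) 1) 1
        (Polynomial.C (Polynomial.X - 1) : Polynomial (Polynomial ℤ)) = 0 := by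
      simp
    have h2 : Polynomial.eval₂ (Polynomial.eval₂RingHom (Int.castRingHom ℤ) 1) 1
        ((Polynomial.X - Polynomial.C 1) : Polynomial (Polynomial ℤ)) = 0 := by
      simp
    rw [Polynomial.eval₂_mul, Polynomial.eval₂_pow, Polynomial.eval₂_pow, h1, h2]
    by_cases hS : G.IsSpanningTree ↑S
    · obtain ⟨ha, hb⟩ := (key S).mpr hS
      rw [ha, hb, if_pos hS]
      simp
    · rw [if_neg hS]
      have hnot : ¬((G.rank Set.univ - G.rank ↑S = 0) ∧ (S.card - G.rank ↑S = 0)) :=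
        fun h => hS ((key S).mp h)
      by_cases ha : G.rank Set.univ - G.rank ↑S = 0
      · have hb : S.card - G.rank ↑S ≠ 0 := by tauto
        rw [ha, pow_zero, one_mul, zero_pow hb]
      · rw [zero_pow ha, zero_mul]
  have hcount : ((Finset.univ.filter (fun S : Finset G.E => G.IsSpanningTree ↑S)).card : ℤ)
      = (Nat.card {T : Set G.E // G.IsSpanningTree T} : ℤ) := by
    congr 1
    rw [← Fintype.card_subtype, ← Nat.card_eq_fintype_card]
    apply Nat.card_congr
    refine ⟨fun S => ⟨(↑S.1 : Set G.E), S.2⟩,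
      fun T => ⟨T.1.toFinset, by rw [Set.coe_toFinset]; exact T.2⟩, ?_, ?_⟩
    · intro S
      apply Subtype.ext
      simp
    · intro T
      apply Subtype.ext
      simp
  rw [tutteEval, tutte, Polynomial.eval₂_finset_sum, Finset.sum_congr rfl hterm,
    Finset.sum_boole, hcount]

end Multigraph


namespace Multigraph
open Relation MGaux

theorem numV_deleteEdge (G : Multigraph) (e : G.E) : (G.deleteEdge e).numV = G.numV := by
  rw [numV, numV, ← Nat.card_eq_fintype_card, ← Nat.card_eq_fintype_card]
  rfl

theorem numV_contractEdge {G : Multigraph} {e : G.E} (h : ¬ G.IsLoop e) :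
    (G.contractEdge e).numV = G.numV - 1 := by
  obtain ⟨a, b, heq, hne⟩ := ends_not_diag h
  rw [numV, numV, ← Nat.card_eq_fintype_card, ← Nat.card_eq_fintype_card,
    Nat.card_eq_fintype_card (α := G.V)]
  exact MGaux.card_quot_tiny (tiny_of_ends heq) heq hne

theorem contract_isLoop_iff {G : Multigraph} {e : G.E} (hnl : ∀ f : G.E, ¬ G.IsLoop f)
    {a b : G.V} (heq : G.ends e = s(a, b)) (f : (G.contractEdge e).E) :
    (G.contractEdge e).IsLoop f ↔ G.ends f.1 = G.ends e := by
  obtain ⟨p, q, hpq⟩ := sym2_exists_rep (G.ends f.1)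
  have hmap : (G.contractEdge e).ends f =
      s(Quot.mk (EqvGen fun v w => G.ends e = s(v, w)) p,
        Quot.mk (EqvGen fun v w => G.ends e = s(v, w)) q) := by
    show Sym2.map _ (G.ends f.1) = _
    rw [hpq, Sym2.map_pair_eq]
    rfl
  constructor
  · intro hl
    have hd : (s(Quot.mk (EqvGen fun v w => G.ends e = s(v, w)) p,
        Quot.mk (EqvGen fun v w => G.ends e = s(v, w)) q)).IsDiag := by
      rw [← hmap]; exact hl
    have hpq' : Quot.mk (EqvGen fun v w => G.ends e = s(v, w)) p =
        Quot.mk (EqvGen fun v w => G.ends e = s(v, w)) q :=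
      (Sym2.mk_isDiag_iff).mp hd
    have := MGaux.quot_mk_eq_iff.mp hpq'
    rcases MGaux.eqvGen_tiny (tiny_of_ends heq) p q this with h' | ⟨rfl, rfl⟩ | ⟨rfl, rfl⟩
    · exfalso
      apply hnl f.1
      rw [IsLoop, hpq, h']
      exact (Sym2.mk_isDiag_iff).mpr rfl
    · rw [hpq, heq]
    · rw [hpq, heq]
      exact Sym2.eq_swap
  · intro hpar
    show ((G.contractEdge e).ends f).IsDiag
    rw [hmap]
    apply (Sym2.mk_isDiag_iff).mpr
    rw [hpq, heq] at hpar
    rcases Sym2.eq_iff.mp hpar with ⟨rfl, rfl⟩ | ⟨rfl, rfl⟩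
    · exact Quot.sound (EqvGen.rel _ _ heq)
    · exact Quot.sound (EqvGen.symm _ _ (EqvGen.rel _ _ heq))

theorem isSpanningTree_not_loop {G : Multigraph} {T : Set G.E} (hT : G.IsSpanningTree T)
    {e : G.E} (he : e ∈ T) : ¬ G.IsLoop e := by
  intro hl
  obtain ⟨a, b, heq⟩ := sym2_exists_rep (G.ends e)
  have hab : a = b := (Sym2.mk_isDiag_iff).mp (heq ▸ hl)
  subst hab
  rw [isSpanningTree_iff] at hT
  obtain ⟨hc, hn⟩ := hT
  have h1 : G.cset T = G.cset (T \ {e}) := cset_diff_eq he heq (EqvGen.refl a)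
  have h2 : G.numV ≤ G.cset (T \ {e}) + (T \ {e}).ncard := numV_le_cset G _
  have h3 : (T \ {e}).ncard = T.ncard - 1 := Set.ncard_diff_singleton_of_mem he
  have h4 : 0 < T.ncard := Set.ncard_pos T.toFinite |>.mpr ⟨e, he⟩
  omega

theorem isSpanningTree_parallel_unique {G : Multigraph} {T : Set G.E} (hT : G.IsSpanningTree T)
    {e f : G.E} (he : e ∈ T) (hf : f ∈ T) (hef : e ≠ f) (hpar : G.ends e = G.ends f) :
    False := by
  obtain ⟨a, b, heq⟩ := sym2_exists_rep (G.ends e)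
  rw [isSpanningTree_iff] at hT
  obtain ⟨hc, hn⟩ := hT
  have hrel : EqvGen (G.erel (T \ {e})) a b :=
    EqvGen.rel _ _ ⟨f, ⟨hf, fun h => hef (Set.mem_singleton_iff.mp h).symm⟩, by rw [← hpar]; exact heq⟩
  have h1 : G.cset T = G.cset (T \ {e}) := cset_diff_eq he heq hrel
  have h2 : G.numV ≤ G.cset (T \ {e}) + (T \ {e}).ncard := numV_le_cset G _
  have h3 : (T \ {e}).ncard = T.ncard - 1 := Set.ncard_diff_singleton_of_mem he
  have h4 : 0 < T.ncard := Set.ncard_pos T.toFinite |>.mpr ⟨e, he⟩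
  omega

theorem swap_tree {G : Multigraph} {T : Set G.E} (hT : G.IsSpanningTree T) {e f : G.E}
    (he : e ∈ T) (hpar : G.ends f = G.ends e) :
    G.IsSpanningTree (insert f (T \ {e})) := by
  by_cases hfe : f = e
  · subst hfe
    rw [Set.insert_diff_singleton, Set.insert_eq_self.mpr he]
    exact hT
  · have hfT : f ∉ T := fun hfT =>
      isSpanningTree_parallel_unique hT he hfT (fun h => hfe h.symm) hpar.symm
    have hTc := (isSpanningTree_iff G T).mp hT
    rw [isSpanningTree_iff]
    constructor
    · have hle1 : G.cset T ≤ G.cset (insert f (T \ {e})) := by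
        apply MGaux.qc_le_of_imp
        rintro v w ⟨g, hg, h⟩
        rcases Set.mem_insert_iff.mp hg with rfl | hg'
        · exact EqvGen.rel _ _ ⟨e, he, by rw [← hpar]; exact h⟩
        · exact EqvGen.rel _ _ ⟨g, hg'.1, h⟩
      have hle2 : G.cset (insert f (T \ {e})) ≤ G.cset T := by
        apply MGaux.qc_le_of_imp
        rintro v w ⟨g, hg, h⟩
        by_cases hge : g = e
        · subst hge
          exact EqvGen.rel _ _ ⟨f, Set.mem_insert _ _, hpar.trans h⟩
        · exact EqvGen.rel _ _ ⟨g, Set.mem_insert_of_mem _ ⟨hg, hge⟩, h⟩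
      have := hTc.1
      omega
    · have h1 : (insert f (T \ {e})).ncard = (T \ {e}).ncard + 1 :=
        Set.ncard_insert_of_notMem (fun h => hfT h.1) (Set.toFinite _)
      have h3 : (T \ {e}).ncard = T.ncard - 1 := Set.ncard_diff_singleton_of_mem he
      have h4 : 0 < T.ncard := Set.ncard_pos T.toFinite |>.mpr ⟨e, he⟩
      have := hTc.2
      omega

theorem val_image_setOf_del (G : Multigraph) (e : G.E) (T : Set G.E) :
    Subtype.val '' {f : (G.deleteEdge e).E | f.1 ∈ T} = T \ {e} := by
  ext g
  constructor
  · rintro ⟨f, hf, rfl⟩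
    exact ⟨hf, f.2⟩
  · rintro ⟨hgT, hge⟩
    exact ⟨⟨g, hge⟩, hgT, rfl⟩

theorem val_image_setOf_con (G : Multigraph) (e : G.E) (T : Set G.E) :
    Subtype.val '' {f : (G.contractEdge e).E | f.1 ∈ T} = T \ {e} := by
  ext g
  constructor
  · rintro ⟨f, hf, rfl⟩
    exact ⟨hf, f.2⟩
  · rintro ⟨hgT, hge⟩
    exact ⟨⟨g, hge⟩, hgT, rfl⟩

theorem isSpanningTree_delete_iff (G : Multigraph) (e : G.E) (T' : Set (G.deleteEdge e).E) :
    (G.deleteEdge e).IsSpanningTree T' ↔ G.IsSpanningTree (Subtype.val '' T') := by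
  erw [isSpanningTree_iff, isSpanningTree_iff, cset_delete,
    Set.ncard_image_of_injective _ Subtype.val_injective, numV_deleteEdge]
  exact Iff.rfl

theorem isSpanningTree_contract_iff {G : Multigraph} {e : G.E} (h : ¬ G.IsLoop e)
    (T' : Set (G.contractEdge e).E) :
    (G.contractEdge e).IsSpanningTree T' ↔
      G.IsSpanningTree (insert e (Subtype.val '' T')) := by
  obtain ⟨a, b, heq, hne⟩ := ends_not_diag h
  haveI : Nonempty G.V := ⟨a⟩
  have hV : 1 ≤ G.numV := by rw [numV]; exact Fintype.card_pos
  rw [isSpanningTree_iff, isSpanningTree_iff, cset_contract, numV_contractEdge h]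
  have hnm : e ∉ Subtype.val '' T' := by
    rintro ⟨f, hf, hval⟩
    exact f.2 hval
  have h1 : (insert e (Subtype.val '' T')).ncard = T'.ncard + 1 := by
    erw [Set.ncard_insert_of_notMem hnm (Set.toFinite _),
      Set.ncard_image_of_injective _ Subtype.val_injective]
    rfl
  rw [h1]
  constructor <;> rintro ⟨hc, hn⟩ <;> exact ⟨hc, by omega⟩

theorem card_trees_delete (G : Multigraph) (e : G.E) :
    Nat.card {T' : Set (G.deleteEdge e).E // (G.deleteEdge e).IsSpanningTree T'}
      = Nat.card {T : Set G.E // G.IsSpanningTree T ∧ e ∉ T} := by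
  apply Nat.card_congr
  refine ⟨fun T' => ⟨Subtype.val '' T'.1, (isSpanningTree_delete_iff G e T'.1).mp T'.2,
      fun hmem => by obtain ⟨f, _, hval⟩ := hmem; exact f.2 hval⟩,
    fun T => ⟨{f : (G.deleteEdge e).E | f.1 ∈ T.1}, ?_⟩, ?_, ?_⟩
  · erw [isSpanningTree_delete_iff, val_image_setOf_del,
      Set.diff_singleton_eq_self T.2.2]
    exact T.2.1
  · intro T'
    apply Subtype.ext
    ext f
    exact Subtype.val_injective.mem_set_image
  · intro T
    apply Subtype.ext
    show Subtype.val '' {f : (G.deleteEdge e).E | f.1 ∈ T.1} = T.1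
    rw [val_image_setOf_del, Set.diff_singleton_eq_self T.2.2]

theorem card_trees_contract {G : Multigraph} {e : G.E} (h : ¬ G.IsLoop e) :
    Nat.card {T' : Set (G.contractEdge e).E // (G.contractEdge e).IsSpanningTree T'}
      = Nat.card {T : Set G.E // G.IsSpanningTree T ∧ e ∈ T} := by
  apply Nat.card_congr
  refine ⟨fun T' => ⟨insert e (Subtype.val '' T'.1),
      (isSpanningTree_contract_iff h T'.1).mp T'.2, Set.mem_insert _ _⟩,
    fun T => ⟨{f : (G.contractEdge e).E | f.1 ∈ T.1}, ?_⟩, ?_, ?_⟩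
  · erw [isSpanningTree_contract_iff h, val_image_setOf_con,
      Set.insert_diff_singleton, Set.insert_eq_self.mpr T.2.2]
    exact T.2.1
  · intro T'
    apply Subtype.ext
    show {f : (G.contractEdge e).E | f.1 ∈ insert e (Subtype.val '' T'.1)} = T'.1
    ext f
    simp only [Set.mem_setOf_eq, Set.mem_insert_iff]
    constructor
    · rintro (hfe | hm)
      · exact absurd hfe f.2
      · exact Subtype.val_injective.mem_set_image.mp hm
    · intro hf
      exact Or.inr ⟨f, hf, rfl⟩
  · intro T
    apply Subtype.ext
    show insert e (Subtype.val '' {f : (G.contractEdge e).E | f.1 ∈ T.1}) = T.1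
    rw [val_image_setOf_con, Set.insert_diff_singleton, Set.insert_eq_self.mpr T.2.2]

theorem card_trees_split (G : Multigraph) (e : G.E) :
    Nat.card {T : Set G.E // G.IsSpanningTree T}
      = Nat.card {T : Set G.E // G.IsSpanningTree T ∧ e ∈ T}
        + Nat.card {T : Set G.E // G.IsSpanningTree T ∧ e ∉ T} := by
  rw [← Nat.card_sum]
  apply Nat.card_congr
  refine ⟨fun T => if h : e ∈ T.1 then Sum.inl ⟨T.1, T.2, h⟩ else Sum.inr ⟨T.1, T.2, h⟩,
    Sum.elim (fun T => ⟨T.1, T.2.1⟩) (fun T => ⟨T.1, T.2.1⟩), ?_, ?_⟩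
  · intro T
    dsimp only
    by_cases h : e ∈ T.1
    · rw [dif_pos h]
      rfl
    · rw [dif_neg h]
      rfl
  · rintro (T | T)
    · dsimp only [Sum.elim_inl]
      rw [dif_pos T.2.2]
    · dsimp only [Sum.elim_inr]
      rw [dif_neg T.2.2]


end Multigraph


namespace Multigraph
open Relation MGaux

theorem connected_nonempty {G : Multigraph} (h : G.Connected) : Nonempty G.V := by
  have h1 : G.cset Set.univ = 1 := by rw [← p0_eq]; exact h
  exact MGaux.nonempty_of_qc (r := G.erel Set.univ) (by rw [← cset, h1]; omega)

theorem cset_compl_singleton {G : Multigraph} (hconn : G.Connected)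
    (hist : ∀ e, ¬ G.IsIsthmus e) (f : G.E) : G.cset {x | x ≠ f} = 1 := by
  have h1 : ¬ (G.p0 < (G.deleteEdge f).p0) := hist f
  have h2 : (G.deleteEdge f).p0 = G.cset {x | x ≠ f} := p0_deleteEdge G f
  haveI := connected_nonempty hconn
  have h3 : 1 ≤ G.cset {x | x ≠ f} := MGaux.one_le_qc _
  have h4 : G.p0 = 1 := hconn
  omega

theorem cset_diff_loop {G : Multigraph} {S : Set G.E} {e : G.E} (he : e ∈ S)
    (hl : G.IsLoop e) : G.cset (S \ {e}) = G.cset S := by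
  obtain ⟨a, b, heq⟩ := sym2_exists_rep (G.ends e)
  have hab : a = b := Sym2.mk_isDiag_iff.mp (heq ▸ hl)
  subst hab
  exact (cset_diff_eq he heq (EqvGen.refl a)).symm

theorem card_trees_lower (G : Multigraph) (e : G.E) :
    {f : G.E | G.ends f = G.ends e}.ncard
        * Nat.card {T : Set G.E // G.IsSpanningTree T ∧ e ∈ T}
      + Nat.card {T : Set G.E //
          G.IsSpanningTree T ∧ ∀ f ∈ {f : G.E | G.ends f = G.ends e}, f ∉ T}
    ≤ Nat.card {T : Set G.E // G.IsSpanningTree T} := by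
  set C : Set G.E := {f : G.E | G.ends f = G.ends e} with hCdef
  have hkey : ∀ (f : G.E), f ∈ C → ∀ (T : Set G.E), G.IsSpanningTree T → e ∈ T →
      ∀ (g : G.E), g ∈ C → g ∈ insert f (T \ {e}) → g = f := by
    intro f _ T hT heT g hg hgmem
    rcases Set.mem_insert_iff.mp hgmem with rfl | ⟨hgT, hge⟩
    · rfl
    · exact absurd (isSpanningTree_parallel_unique hT heT hgT
        (fun hh => hge (Set.mem_singleton_iff.mpr hh.symm)) hg.symm) id
  have hrec : ∀ (f : G.E), f ∈ C → ∀ (T : Set G.E), G.IsSpanningTree T → e ∈ T →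
      insert e ((insert f (T \ {e})) \ {f}) = T := by
    intro f hf T hT heT
    have h1 : (insert f (T \ {e})) \ {f} = (T \ {e}) \ {f} := by
      ext g
      simp only [Set.mem_diff, Set.mem_insert_iff, Set.mem_singleton_iff]
      tauto
    have h2 : (T \ {e}) \ {f} = T \ {e} := by
      rw [Set.diff_singleton_eq_self]
      rintro ⟨hfT, hfe⟩
      exact isSpanningTree_parallel_unique hT heT hfT
        (fun hh => hfe (Set.mem_singleton_iff.mpr hh.symm)) hf.symm
    rw [h1, h2, Set.insert_diff_singleton, Set.insert_eq_self.mpr heT]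
  have hφ : Function.Injective
      (fun x : (↥C × {T : Set G.E // G.IsSpanningTree T ∧ e ∈ T}) ⊕
          {T : Set G.E // G.IsSpanningTree T ∧ ∀ f ∈ C, f ∉ T} =>
        Sum.elim
          (fun p : ↥C × {T : Set G.E // G.IsSpanningTree T ∧ e ∈ T} =>
            (⟨insert p.1.1 (p.2.1 \ {e}),
              swap_tree p.2.2.1 p.2.2.2 p.1.2⟩ : {T : Set G.E // G.IsSpanningTree T}))
          (fun T => ⟨T.1, T.2.1⟩) x) := by
    rintro (⟨⟨f, hfC⟩, ⟨T, hT, heT⟩⟩ | ⟨T, hT, hTC⟩)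
      (⟨⟨f', hfC'⟩, ⟨T', hT', heT'⟩⟩ | ⟨T', hT', hTC'⟩) h <;>
      simp only [Sum.elim_inl, Sum.elim_inr, Subtype.mk.injEq] at h
    · have hff' : f' = f :=
        hkey f hfC T hT heT f' hfC' (by rw [h]; exact Set.mem_insert _ _)
      subst hff'
      have hTT' : T = T' := by
        have h1 := hrec f' hfC T hT heT
        have h2 := hrec f' hfC' T' hT' heT'
        rw [← h1, ← h2, h]
      subst hTT'
      rfl
    · exfalso
      apply hTC' f hfC
      rw [← h]
      exact Set.mem_insert _ _
    · exfalso
      apply hTC f' hfC'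
      rw [h]
      exact Set.mem_insert _ _
    · subst h
      rfl
  have hcard := Nat.card_le_card_of_injective _ hφ
  rw [Nat.card_sum, Nat.card_prod] at hcard
  rw [← Nat.card_coe_set_eq]
  exact hcard

theorem not_numE_eq_parallel_succ {G : Multigraph} (hconn : G.Connected)
    (hist : ∀ f, ¬ G.IsIsthmus f) (hloop : ∀ f : G.E, ¬ G.IsLoop f) (e : G.E)
    {a b : G.V} (heq : G.ends e = s(a, b)) (hne : a ≠ b)
    (hm : G.numE = {f : G.E | G.ends f = G.ends e}.ncard + 1) : False := by
  set C : Set G.E := {f : G.E | G.ends f = G.ends e} with hC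
  have hcompl : Cᶜ.ncard = 1 := by
    have h1 := Set.ncard_add_ncard_compl C
    rw [Nat.card_eq_fintype_card] at h1
    rw [numE] at hm
    omega
  obtain ⟨g, hg⟩ := Set.ncard_eq_one.mp hcompl
  have hCeq : C = {x | x ≠ g} := by
    have h1 : Cᶜᶜ = ({g} : Set G.E)ᶜ := by rw [hg]
    rw [compl_compl] at h1
    rw [h1]
    ext x
    simp
  have h1 : G.cset C = 1 := by rw [hCeq]; exact cset_compl_singleton hconn hist g
  have htiny : ∀ v w, G.erel C v w → (v = a ∧ w = b) ∨ (v = b ∧ w = a) := by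
    rintro v w ⟨f, hf, h⟩
    refine tiny_of_ends heq v w ?_
    rw [← hf]
    exact h
  have h2 : G.cset C = G.numV - 1 := by
    rw [cset, MGaux.qc, numV]
    exact MGaux.card_quot_tiny htiny ⟨e, rfl, heq⟩ hne
  have hV2 : G.numV = 2 := by omega
  have hall : ∀ v : G.V, v = a ∨ v = b := by
    intro v
    by_contra hv
    push_neg at hv
    have h3 : ({v, a, b} : Finset G.V).card = 3 := by
      rw [Finset.card_insert_of_notMem (by simp [hv.1, hv.2]),
        Finset.card_insert_of_notMem (by simp [hne]), Finset.card_singleton]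
    have h4 := Finset.card_le_univ ({v, a, b} : Finset G.V)
    rw [h3] at h4
    rw [numV] at hV2
    omega
  obtain ⟨p, q, hpq, hpq'⟩ := ends_not_diag (hloop g)
  have hgC : g ∈ C := by
    show G.ends g = G.ends e
    rcases hall p with rfl | rfl <;> rcases hall q with rfl | rfl
    · exact absurd rfl hpq'
    · rw [hpq, heq]
    · rw [hpq, heq]; exact Sym2.eq_swap
    · exact absurd rfl hpq'
  have hgc : g ∈ Cᶜ := by rw [hg]; exact Set.mem_singleton g
  exact hgc hgC

theorem mul_bound {k j : ℕ} (hk : 2 ≤ k) (hj : 2 ≤ j) : k + j ≤ k * j := by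
  obtain ⟨k', rfl⟩ : ∃ k', k = k' + 2 := ⟨k - 2, by omega⟩
  obtain ⟨j', rfl⟩ : ∃ j', j = j' + 2 := ⟨j - 2, by omega⟩
  have hexp : (k' + 2) * (j' + 2) = k' * j' + (2 * k' + 2 * j' + 4) := by ring
  rw [hexp]
  have h1 : k' + 2 + (j' + 2) ≤ 2 * k' + 2 * j' + 4 := by omega
  exact le_trans h1 (Nat.le_add_left _ _)

theorem main_bound : ∀ (N : ℕ) (G : Multigraph), G.numE ≤ N → G.Connected →
    (∀ e, ¬ G.IsIsthmus e) →
    Nat.card {e : G.E // ¬ G.IsLoop e} ≤ Nat.card {T : Set G.E // G.IsSpanningTree T} := by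
  intro N
  induction N with
  | zero =>
      intro G hE _ _
      have h1 : Nat.card {e : G.E // ¬ G.IsLoop e} ≤ Nat.card G.E :=
        Nat.card_le_card_of_injective Subtype.val Subtype.val_injective
      have h2 : Nat.card G.E = G.numE := Nat.card_eq_fintype_card
      omega
  | succ N ih =>
      intro G hE hconn hist
      haveI hV := connected_nonempty hconn
      have hcu : G.cset Set.univ = 1 := by rw [← p0_eq]; exact hconn
      by_cases hloopex : ∃ e : G.E, G.IsLoop e
      · obtain ⟨e, he⟩ := hloopex
        have huniv : (Set.univ \ {e} : Set G.E) = {x | x ≠ e} := by ext x; simp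
        have hconn' : (G.deleteEdge e).Connected := by
          show (G.deleteEdge e).p0 = 1
          rw [p0_deleteEdge, ← huniv, cset_diff_loop (Set.mem_univ e) he, hcu]
        have hist' : ∀ f, ¬ (G.deleteEdge e).IsIsthmus f := by
          intro f hf
          have h2 : ((G.deleteEdge e).deleteEdge f).p0
              = (G.deleteEdge e).cset {x | x ≠ f} := p0_deleteEdge _ f
          rw [cset_delete] at h2
          have h3 : Subtype.val '' {x : (G.deleteEdge e).E | x ≠ f}
              = {x : G.E | x ≠ f.1} \ {e} := by
            ext g
            constructor
            · rintro ⟨x, hx, rfl⟩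
              exact ⟨fun hh => hx (Subtype.ext hh), x.2⟩
            · rintro ⟨hg1, hg2⟩
              exact ⟨⟨g, hg2⟩, fun hh => hg1 (congrArg Subtype.val hh), rfl⟩
          have h4 : G.cset ({x : G.E | x ≠ f.1} \ {e}) = G.cset {x | x ≠ f.1} :=
            cset_diff_loop (fun hh => f.2 hh.symm) he
          have h5 : G.cset {x : G.E | x ≠ f.1} = 1 := cset_compl_singleton hconn hist f.1
          have h6 : (G.deleteEdge e).p0 = 1 := hconn'
          erw [h3, h4, h5] at h2
          rw [IsIsthmus, h2, h6] at hf
          omega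
        have hE' : (G.deleteEdge e).numE ≤ N := by
          rw [numE_deleteEdge]
          haveI : Nonempty G.E := ⟨e⟩
          have h7 : 1 ≤ G.numE := by rw [numE]; exact Fintype.card_pos
          omega
        have hmain := ih (G.deleteEdge e) hE' hconn' hist'
        have hcount : Nat.card {f : (G.deleteEdge e).E // ¬ (G.deleteEdge e).IsLoop f}
            = Nat.card {g : G.E // ¬ G.IsLoop g} := by
          apply Nat.card_congr
          refine ⟨fun f => ⟨f.1.1, f.2⟩,
            fun g => ⟨⟨g.1, fun hh => g.2 (show G.IsLoop g.1 from hh ▸ he)⟩, g.2⟩, ?_, ?_⟩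
          · intro f; rfl
          · intro g; rfl
        have htrees : Nat.card {T : Set G.E // G.IsSpanningTree T}
            = Nat.card {T' : Set (G.deleteEdge e).E // (G.deleteEdge e).IsSpanningTree T'} := by
          rw [card_trees_delete]
          have hsplit := card_trees_split G e
          have hA : Nat.card {T : Set G.E // G.IsSpanningTree T ∧ e ∈ T} = 0 := by
            haveI : IsEmpty {T : Set G.E // G.IsSpanningTree T ∧ e ∈ T} :=
              ⟨fun T => isSpanningTree_not_loop T.2.1 T.2.2 he⟩
            exact Nat.card_of_isEmpty
          omega
        rw [← hcount, htrees]
        exact hmain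
      · push_neg at hloopex
        by_cases hE0 : G.numE = 0
        · have h1 : Nat.card {e : G.E // ¬ G.IsLoop e} ≤ Nat.card G.E :=
            Nat.card_le_card_of_injective Subtype.val Subtype.val_injective
          have h2 : Nat.card G.E = G.numE := Nat.card_eq_fintype_card
          omega
        · haveI : Nonempty G.E := by
            rw [numE] at hE0
            exact Fintype.card_pos_iff.mp (Nat.pos_of_ne_zero hE0)
          obtain ⟨e⟩ := ‹Nonempty G.E›
          obtain ⟨a, b, heq, hne⟩ := ends_not_diag (hloopex e)
          set C : Set G.E := {f : G.E | G.ends f = G.ends e} with hC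
          have heC : e ∈ C := rfl
          have hk1 : 1 ≤ C.ncard := Set.ncard_pos C.toFinite |>.mpr ⟨e, heC⟩
          have hkm : C.ncard ≤ G.numE := by
            have h1 := Set.ncard_le_ncard (Set.subset_univ C) Set.finite_univ
            rw [Set.ncard_univ, Nat.card_eq_fintype_card] at h1
            exact h1
          have himgu : insert e (Subtype.val ''
              (Set.univ : Set (G.contractEdge e).E)) = Set.univ := by
            ext g
            simp only [Set.mem_insert_iff, Set.mem_image, Set.mem_univ, iff_true]
            by_cases hg : g = e
            · exact Or.inl hg
            · exact Or.inr ⟨⟨g, hg⟩, trivial, rfl⟩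
          have hconnC : (G.contractEdge e).Connected := by
            show (G.contractEdge e).p0 = 1
            rw [p0_eq (G.contractEdge e), cset_contract, himgu, hcu]
          have histC : ∀ f, ¬ (G.contractEdge e).IsIsthmus f := by
            intro f hf
            have h2 : ((G.contractEdge e).deleteEdge f).p0
                = (G.contractEdge e).cset {x | x ≠ f} := p0_deleteEdge _ f
            rw [cset_contract] at h2
            have h3 : insert e (Subtype.val '' {x : (G.contractEdge e).E | x ≠ f})
                = {x : G.E | x ≠ f.1} := by
              ext g
              simp only [Set.mem_insert_iff, Set.mem_image, Set.mem_setOf_eq]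
              constructor
              · rintro (rfl | ⟨x, hx, rfl⟩)
                · exact fun hh => f.2 hh.symm
                · exact fun hh => hx (Subtype.ext hh)
              · intro hg
                by_cases hge : g = e
                · exact Or.inl hge
                · exact Or.inr ⟨⟨g, hge⟩, fun hh => hg (congrArg Subtype.val hh), rfl⟩
            erw [h3, cset_compl_singleton hconn hist f.1] at h2
            have h6 : (G.contractEdge e).p0 = 1 := hconnC
            rw [IsIsthmus, h2, h6] at hf
            omega
          have hEc : (G.contractEdge e).numE ≤ N := by
            rw [numE_contractEdge]
            have h7 : 1 ≤ G.numE := by rw [numE]; exact Fintype.card_pos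
            omega
          have hmainC := ih _ hEc hconnC histC
          have hnlC : Nat.card {f : (G.contractEdge e).E // ¬ (G.contractEdge e).IsLoop f}
              = G.numE - C.ncard := by
            have hstep : Nat.card {f : (G.contractEdge e).E // ¬ (G.contractEdge e).IsLoop f}
                = Nat.card {g : G.E // g ∉ C} := by
              apply Nat.card_congr
              refine ⟨fun f => ⟨f.1.1, fun hmem => f.2 ((contract_isLoop_iff hloopex heq f.1).mpr hmem)⟩,
                fun g => ⟨⟨g.1, fun hh => g.2 (by rw [hh]; exact heC)⟩,
                  fun hl => g.2 ((contract_isLoop_iff hloopex heq _).mp hl)⟩, ?_, ?_⟩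
              · intro f; rfl
              · intro g; rfl
            rw [hstep, Nat.card_eq_fintype_card, Fintype.card_subtype_compl, numE]
            congr 1
            rw [← Nat.card_coe_set_eq, Nat.card_eq_fintype_card]
          rw [hnlC, card_trees_contract (hloopex e)] at hmainC
          have ht1 : 1 ≤ Nat.card {T : Set G.E // G.IsSpanningTree T ∧ e ∈ T} := by
            rw [← card_trees_contract (hloopex e)]
            obtain ⟨T', hT'⟩ := exists_spanning_tree hconnC
            haveI : Nonempty {T' : Set (G.contractEdge e).E //
                (G.contractEdge e).IsSpanningTree T'} := ⟨⟨T', hT'⟩⟩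
            exact Nat.card_pos
          have hlow := card_trees_lower G e
          rw [← hC] at hlow
          have hnle : Nat.card {f : G.E // ¬ G.IsLoop f} = G.numE := by
            rw [numE, ← Nat.card_eq_fintype_card]
            exact Nat.card_congr (Equiv.subtypeUnivEquiv hloopex)
          rw [hnle]
          set m := G.numE
          set k := C.ncard
          set t := Nat.card {T : Set G.E // G.IsSpanningTree T ∧ e ∈ T}
          set d := Nat.card {T : Set G.E //
            G.IsSpanningTree T ∧ ∀ f ∈ C, f ∉ T}
          -- case analysis
          by_cases hk : k = 1
          · -- C = {e}, get a tree avoiding e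
            have hCe : C = {e} := by
              obtain ⟨x, hx⟩ := Set.ncard_eq_one.mp hk
              have : e ∈ ({x} : Set G.E) := hx ▸ heC
              rw [Set.mem_singleton_iff] at this
              rw [hx, this]
            have hconnD : (G.deleteEdge e).Connected := by
              show (G.deleteEdge e).p0 = 1
              rw [p0_deleteEdge]
              exact cset_compl_singleton hconn hist e
            obtain ⟨T', hT'⟩ := exists_spanning_tree hconnD
            have hd1 : 1 ≤ d := by
              haveI : Nonempty {T : Set G.E // G.IsSpanningTree T ∧ ∀ f ∈ C, f ∉ T} := by
                refine ⟨⟨Subtype.val '' T', (isSpanningTree_delete_iff G e T').mp hT', ?_⟩⟩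
                intro f hf
                rw [hCe, Set.mem_singleton_iff] at hf
                subst hf
                rintro ⟨x, _, hx⟩
                exact x.2 hx
              exact Nat.card_pos
            rw [hk, one_mul] at hlow
            rw [hk] at hmainC
            omega
          · -- k ≥ 2
            have hk2 : 2 ≤ k := by omega
            by_cases hmk : m = k
            · have hstep : m ≤ k * t := by
                rw [hmk]
                calc k = k * 1 := (Nat.mul_one k).symm
                  _ ≤ k * t := Nat.mul_le_mul le_rfl ht1
              exact le_trans hstep (le_trans (Nat.le_add_right _ _) hlow)
            · by_cases hmk1 : m = k + 1
              · exact absurd (not_numE_eq_parallel_succ hconn hist hloopex e heq hne hmk1) id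
              · have hm2 : k + 2 ≤ m := by omega
                have hmul : k * (m - k) ≤ k * t := Nat.mul_le_mul le_rfl hmainC
                have hgoal : m ≤ k * (m - k) := by
                  have h6 : 2 ≤ m - k := by omega
                  calc m = k + (m - k) := by omega
                    _ ≤ k * (m - k) := mul_bound hk2 h6
                exact le_trans hgoal (le_trans hmul (le_trans (Nat.le_add_right _ _) hlow))

end Multigraph


namespace Multigraph

/-- For a connected graph without loops and isthmuses, the number of spanning
trees (which equals `χ(G;1,1)`) is at least the number of edges. -/
theorem tutte_one_one_ge_card_edges (G : Multigraph) (hG : G.Connected)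
    (hloop : ∀ e : G.E, ¬G.IsLoop e) (hist : ∀ e : G.E, ¬G.IsIsthmus e) :
    G.tutteEval (1 : ℤ) 1 = Nat.card {T : Set G.E // G.IsSpanningTree T} ∧
    (G.numE : ℤ) ≤ G.tutteEval (1 : ℤ) 1 := by
  constructor
  · exact tutteEval_one_one G hG
  · rw [tutteEval_one_one G hG]
    have h := main_bound G.numE G le_rfl hG hist
    have hnl : Nat.card {e : G.E // ¬ G.IsLoop e} = G.numE := by
      rw [numE, ← Nat.card_eq_fintype_card]
      exact Nat.card_congr (Equiv.subtypeUnivEquiv hloop)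
    rw [hnl] at h
    exact_mod_cast h

end Multigraph
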